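/- arXiv:2001.00169 — 4 statements merged into one kernel-verified Lean document; each statement's English description precedes it below -/
import Mathlib

section
/- Discrete fractional Gronwall inequality: let 0 < α < 1 and b_i = (i+1)^{1-α} - i^{1-α}. Suppose (ψ^n)_{n≥0} is a sequence of nonnegative reals with ψ^0 = 0, χ > 0, and for all n ≥ 1, ψ^n ≤ ∑_{k=1}^{n-1} (b_{k-1} - b_k) ψ^{n-k} + χ. Then ψ^n ≤ χ / b_{n-1} for all n ≥ 1; in particular, since b_{n-1} ≥ (1-α) n^{-α}, it follows that ψ^n ≤ n^α χ / (1-α). -/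
open Finset

/-- Decreasing increments of a concave power function. -/
lemma rpow_incr_anti {p : ℝ} (hp0 : 0 < p) (hp1 : p < 1) {x y : ℝ} (hx : 0 ≤ x)
    (hxy : x ≤ y) : (y + 1) ^ p - y ^ p ≤ (x + 1) ^ p - x ^ p := by
  rcases eq_or_lt_of_le hxy with rfl | hlt
  · exact le_rfl
  · have hT : 0 < y + 1 - x := by linarith
    have hconc := Real.concaveOn_rpow hp0.le hp1.le
    have hy : (0:ℝ) ≤ y := hx.trans hxy
    have ha : 0 ≤ (y - x) / (y + 1 - x) := div_nonneg (by linarith) hT.le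
    have hb : 0 ≤ 1 / (y + 1 - x) := by positivity
    have hab : (y - x) / (y + 1 - x) + 1 / (y + 1 - x) = 1 := by field_simp; ring
    have h1 := hconc.2 (Set.mem_Ici.mpr hx) (Set.mem_Ici.mpr (by linarith : (0:ℝ) ≤ y + 1))
      ha hb hab
    have h2 := hconc.2 (Set.mem_Ici.mpr hx) (Set.mem_Ici.mpr (by linarith : (0:ℝ) ≤ y + 1))
      hb ha (by linarith)
    simp only [smul_eq_mul] at h1 h2
    have e1 : (y - x) / (y + 1 - x) * x + 1 / (y + 1 - x) * (y + 1) = x + 1 := by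
      field_simp; ring
    have e2 : 1 / (y + 1 - x) * x + (y - x) / (y + 1 - x) * (y + 1) = y := by
      field_simp; ring
    rw [e1] at h1
    rw [e2] at h2
    have key : (y - x) / (y + 1 - x) * x ^ p + 1 / (y + 1 - x) * (y + 1) ^ p
        + (1 / (y + 1 - x) * x ^ p + (y - x) / (y + 1 - x) * (y + 1) ^ p)
        = x ^ p + (y + 1) ^ p := by
      linear_combination (x ^ p + (y + 1) ^ p) * hab
    linarith

/-- MVT lower bound for the increment. -/
lemma rpow_incr_lb {p : ℝ} (hp0 : 0 < p) (hp1 : p ≤ 1) {t : ℝ} (ht : 1 ≤ t) :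
    p * t ^ (p - 1) ≤ t ^ p - (t - 1) ^ p := by
  have hlt : t - 1 < t := by linarith
  have hcont : ContinuousOn (fun x : ℝ => x ^ p) (Set.Icc (t - 1) t) := fun x _ =>
    (Real.continuousAt_rpow_const x p (Or.inr hp0.le)).continuousWithinAt
  have hderiv : ∀ x ∈ Set.Ioo (t - 1) t,
      HasDerivAt (fun x : ℝ => x ^ p) (p * x ^ (p - 1)) x := by
    intro x hx
    have hx0 : 0 < x := lt_of_le_of_lt (by linarith) hx.1
    exact Real.hasDerivAt_rpow_const (Or.inl hx0.ne')
  obtain ⟨c, hc, hceq⟩ := exists_hasDerivAt_eq_slope (fun x : ℝ => x ^ p)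
    (fun x => p * x ^ (p - 1)) hlt hcont hderiv
  have hc0 : 0 < c := lt_of_le_of_lt (by linarith) hc.1
  have : t ^ (p - 1) ≤ c ^ (p - 1) :=
    Real.rpow_le_rpow_of_nonpos hc0 hc.2.le (by linarith)
  have h2 : p * t ^ (p - 1) ≤ p * c ^ (p - 1) :=
    mul_le_mul_of_nonneg_left this hp0.le
  rw [hceq] at h2
  have : t - (t - 1) = 1 := by ring
  rw [this, div_one] at h2
  exact h2

theorem stmt_5 (α : ℝ) (hα0 : 0 < α) (hα1 : α < 1)
    (b : ℕ → ℝ) (hb : ∀ i : ℕ, b i = ((i : ℝ) + 1) ^ (1 - α) - (i : ℝ) ^ (1 - α))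
    (ψ : ℕ → ℝ) (hψ0 : ψ 0 = 0) (hψnn : ∀ n, 0 ≤ ψ n)
    (χ : ℝ) (hχ : 0 < χ)
    (hrec : ∀ n : ℕ, 1 ≤ n →
      ψ n ≤ (∑ k ∈ Finset.Icc 1 (n - 1), (b (k - 1) - b k) * ψ (n - k)) + χ) :
    ∀ n : ℕ, 1 ≤ n →
      ψ n ≤ χ / b (n - 1) ∧ ψ n ≤ (n : ℝ) ^ α * χ / (1 - α) := by
  have hp0 : (0:ℝ) < 1 - α := by linarith
  have hbpos : ∀ i : ℕ, 0 < b i := by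
    intro i
    rw [hb]
    have : (i : ℝ) ^ (1 - α) < ((i : ℝ) + 1) ^ (1 - α) :=
      Real.rpow_lt_rpow (Nat.cast_nonneg i) (by linarith) hp0
    linarith
  have hbanti : ∀ i j : ℕ, i ≤ j → b j ≤ b i := by
    intro i j hij
    rw [hb, hb]
    exact rpow_incr_anti hp0 (by linarith) (Nat.cast_nonneg i) (Nat.cast_le.mpr hij)
  have hb0 : b 0 = 1 := by
    rw [hb]
    simp [Real.zero_rpow (by linarith : 1 - α ≠ 0)]
  have key : ∀ n : ℕ, 1 ≤ n → ψ n ≤ χ / b (n - 1) := by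
    intro n
    induction n using Nat.strong_induction_on with
    | _ n IH =>
      intro hn
      have hbn := hbpos (n - 1)
      have step : ∀ k ∈ Finset.Icc 1 (n - 1),
          (b (k - 1) - b k) * ψ (n - k) ≤ (b (k - 1) - b k) * (χ / b (n - 1)) := by
        intro k hk
        rw [Finset.mem_Icc] at hk
        have hkn : k < n := by omega
        have hnk1 : 1 ≤ n - k := by omega
        have hnkn : n - k < n := by omega
        have h1 : ψ (n - k) ≤ χ / b (n - k - 1) := IH (n - k) hnkn hnk1
        have h2 : χ / b (n - k - 1) ≤ χ / b (n - 1) := by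
          apply div_le_div_of_nonneg_left hχ.le hbn
          exact hbanti _ _ (by omega)
        have hcoef : 0 ≤ b (k - 1) - b k :=
          sub_nonneg.mpr (hbanti (k - 1) k (by omega))
        exact mul_le_mul_of_nonneg_left (h1.trans h2) hcoef
      have hsum : ∑ k ∈ Finset.Icc 1 (n - 1), (b (k - 1) - b k) = 1 - b (n - 1) := by
        have hIcc : Finset.Icc 1 (n - 1) = Finset.Ico 1 n := by
          rw [← Finset.Ico_add_one_right_eq_Icc]
          congr 1
          omega
        rw [hIcc, Finset.sum_Ico_eq_sum_range]
        have : ∀ j ∈ Finset.range (n - 1), b (1 + j - 1) - b (1 + j) = b j - b (j + 1) := by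
          intro j _
          congr 2 <;> omega
        rw [Finset.sum_congr rfl this, Finset.sum_range_sub' b, hb0]
      calc ψ n ≤ (∑ k ∈ Finset.Icc 1 (n - 1), (b (k - 1) - b k) * ψ (n - k)) + χ :=
            hrec n hn
        _ ≤ (∑ k ∈ Finset.Icc 1 (n - 1), (b (k - 1) - b k) * (χ / b (n - 1))) + χ :=
            add_le_add_left (Finset.sum_le_sum step) χ
        _ = (1 - b (n - 1)) * (χ / b (n - 1)) + χ := by rw [← Finset.sum_mul, hsum]
        _ = χ / b (n - 1) := by field_simp; ring
  intro n hn
  refine ⟨key n hn, ?_⟩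
  have hn1 : (1:ℝ) ≤ (n:ℝ) := by exact_mod_cast hn
  have hnpos : (0:ℝ) < (n:ℝ) := by linarith
  have hlb : (1 - α) * (n:ℝ) ^ (-α) ≤ b (n - 1) := by
    rw [hb]
    have hcast : ((n - 1 : ℕ) : ℝ) = (n:ℝ) - 1 := by
      push_cast [Nat.cast_sub hn]; ring
    rw [hcast]
    have := rpow_incr_lb hp0 (by linarith) hn1
    have he : (1 - α) - 1 = -α := by ring
    rw [he] at this
    have hone : (n:ℝ) - 1 + 1 = (n:ℝ) := by ring
    rw [hone]
    exact this
  have hden : (0:ℝ) < (1 - α) * (n:ℝ) ^ (-α) :=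
    mul_pos hp0 (Real.rpow_pos_of_pos hnpos _)
  have h3 : χ / b (n - 1) ≤ χ / ((1 - α) * (n:ℝ) ^ (-α)) :=
    div_le_div_of_nonneg_left hχ.le hden hlb
  have h4 : χ / ((1 - α) * (n:ℝ) ^ (-α)) = (n:ℝ) ^ α * χ / (1 - α) := by
    rw [Real.rpow_neg hnpos.le]
    have hna : (0:ℝ) < (n:ℝ) ^ α := Real.rpow_pos_of_pos hnpos _
    field_simp
  linarith [key n hn]
end

section
/- Induction stability bound: let 0 < α < 1, b_i = (i+1)^{1-α} - i^{1-α}, and let (c_i)_{i≥1} be reals with 0 < c_i ≤ 1 (e.g. c_i = e^{-iγτ} with γ, τ ≥ 0). Suppose a sequence of nonnegative reals (a_n)_{n≥0} satisfies, for every n ≥ 1, a_n^2 ≤ (∑_{i=1}^{n-1} (b_{i-1} - b_i) c_i a_{n-i} + b_{n-1} c_n a_0) · a_n. Then a_n ≤ a_0 for all n ≥ 0. -/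
theorem stmt_6 (α : ℝ) (hα0 : 0 < α) (hα1 : α < 1)
    (b : ℕ → ℝ) (hb : ∀ i : ℕ, b i = ((i : ℝ) + 1) ^ (1 - α) - (i : ℝ) ^ (1 - α))
    (c : ℕ → ℝ) (hc : ∀ i : ℕ, 1 ≤ i → 0 < c i ∧ c i ≤ 1)
    (a : ℕ → ℝ) (ha : ∀ n, 0 ≤ a n)
    (hrec : ∀ n : ℕ, 1 ≤ n →
      (a n) ^ 2 ≤ ((∑ i ∈ Finset.Icc 1 (n - 1), (b (i - 1) - b i) * c i * a (n - i))
        + b (n - 1) * c n * a 0) * a n) :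
    ∀ n : ℕ, a n ≤ a 0 := by
  have hp0 : (0:ℝ) < 1 - α := by linarith
  -- b is nonnegative
  have hbpos : ∀ i : ℕ, 0 ≤ b i := by
    intro i
    rw [hb i]
    have : ((i:ℝ)) ^ (1 - α) ≤ ((i:ℝ) + 1) ^ (1 - α) :=
      Real.rpow_le_rpow (by positivity) (by linarith) hp0.le
    linarith
  -- b 0 = 1
  have hb0 : b 0 = 1 := by
    rw [hb 0]
    simp [Real.zero_rpow hp0.ne']
  -- b is decreasing
  have hbdec : ∀ i : ℕ, 1 ≤ i → b i ≤ b (i - 1) := by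
    intro i hi
    obtain ⟨k, rfl⟩ := Nat.exists_eq_add_of_le hi
    simp only [Nat.add_sub_cancel_left]
    rw [hb, hb]
    push_cast
    have hcc := Real.concaveOn_rpow hp0.le (by linarith : (1:ℝ) - α ≤ 1)
    have key := hcc.2 (Set.mem_Ici.mpr (by positivity : (0:ℝ) ≤ (k:ℝ)))
      (Set.mem_Ici.mpr (by positivity : (0:ℝ) ≤ (k:ℝ) + 2))
      (by norm_num : (0:ℝ) ≤ 1/2) (by norm_num : (0:ℝ) ≤ 1/2) (by norm_num : (1:ℝ)/2 + 1/2 = 1)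
    have h1 : ((1:ℝ)/2) • (k:ℝ) + ((1:ℝ)/2) • ((k:ℝ) + 2) = (k:ℝ) + 1 := by
      simp only [smul_eq_mul]; ring
    have key' : (1/2:ℝ) * (k:ℝ) ^ (1-α) + (1/2:ℝ) * ((k:ℝ)+2) ^ (1-α)
        ≤ ((k:ℝ)+1) ^ (1-α) := by rw [h1] at key; simpa [smul_eq_mul] using key
    rw [show (1 + (k:ℝ) + 1) = (k:ℝ) + 2 by ring, show (1 + (k:ℝ)) = (k:ℝ) + 1 by ring]
    linarith
  -- telescoping sum
  have htel : ∀ m : ℕ, ∑ i ∈ Finset.Icc 1 m, (b (i - 1) - b i) = b 0 - b m := by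
    intro m
    induction m with
    | zero => simp
    | succ k ih =>
      rw [Finset.sum_Icc_succ_top (Nat.one_le_iff_ne_zero.mpr (Nat.succ_ne_zero k)), ih]
      simp
  intro n
  induction n using Nat.strong_induction_on with
  | _ n ih =>
    rcases Nat.eq_zero_or_pos n with rfl | hn
    · exact le_refl _
    rcases eq_or_lt_of_le (ha n) with h0 | h0
    · rw [← h0]; exact ha 0
    have hrn := hrec n hn
    have han : a n ≤ (∑ i ∈ Finset.Icc 1 (n - 1), (b (i - 1) - b i) * c i * a (n - i))
        + b (n - 1) * c n * a 0 := by
      rw [sq] at hrn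
      exact le_of_mul_le_mul_right hrn h0
    have hbound : (∑ i ∈ Finset.Icc 1 (n - 1), (b (i - 1) - b i) * c i * a (n - i))
        + b (n - 1) * c n * a 0
        ≤ (∑ i ∈ Finset.Icc 1 (n - 1), (b (i - 1) - b i)) * a 0 + b (n - 1) * a 0 := by
      apply add_le_add
      · rw [Finset.sum_mul]
        apply Finset.sum_le_sum
        intro i hi
        simp only [Finset.mem_Icc] at hi
        have hbi := hbdec i hi.1
        have hci := hc i hi.1
        have hani : a (n - i) ≤ a 0 := ih (n - i) (by omega)
        have hanip := ha (n - i)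
        have h4 : c i * a (n - i) ≤ a 0 := by
          calc c i * a (n - i) ≤ 1 * a (n - i) := mul_le_mul_of_nonneg_right hci.2 hanip
            _ = a (n - i) := one_mul _
            _ ≤ a 0 := hani
        rw [mul_assoc]
        exact mul_le_mul_of_nonneg_left h4 (by linarith)
      · have hcn := hc n hn
        rw [mul_assoc]
        have h5 : c n * a 0 ≤ a 0 := by
          calc c n * a 0 ≤ 1 * a 0 := mul_le_mul_of_nonneg_right hcn.2 (ha 0)
            _ = a 0 := one_mul _
        exact mul_le_mul_of_nonneg_left h5 (hbpos _)
    rw [htel (n-1)] at hbound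
    calc a n ≤ _ := han
      _ ≤ _ := hbound
      _ = a 0 := by rw [hb0]; ring
end

section
/- Let Ω = [a,b] and let v, p be functions that are polynomial on each cell I_j = [x_{j-1/2}, x_{j+1/2}] of a partition, extended periodically. Define the weighted average w^{(δ)} = δ w^+ + (1-δ) w^- at each interface. Then the bilinear form F(u,p;p,u) = ∑_j [∫_{I_j} u p_x dx - (u^{(δ)} p^-)_{j+1/2} + (u^{(δ)} p^+)_{j-1/2} + ∫_{I_j} p u_x dx - (p^{(1-δ)} u^-)_{j+1/2} + (p^{(1-δ)} u^+)_{j-1/2}] vanishes identically for all such u, p and all δ ∈ ℝ. -/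
/-- LDG bilinear form with generalized alternating fluxes vanishes on a periodic mesh.
Cells are `I j = [x j, x (j+1)]` for `j = 0, …, N-1`; `u j`, `p j` are the (C¹, e.g.
polynomial) pieces on cell `j`.  `Um k, Up k` (resp. `Pm k, Pp k`) are the left/right
traces of `u` (resp. `p`) at interface `x k`, with periodic identification of the
interfaces `k = 0` and `k = N`. -/
theorem stmt_11 (N : ℕ) (hN : 1 ≤ N) (x : ℕ → ℝ) (hx : ∀ j, j < N → x j < x (j + 1))
    (u p : ℕ → ℝ → ℝ)
    (hu : ∀ j, ContDiff ℝ 1 (u j)) (hp : ∀ j, ContDiff ℝ 1 (p j))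
    (δ : ℝ)
    (Um Up Pm Pp : ℕ → ℝ)
    (hUm : ∀ k, 1 ≤ k → k ≤ N → Um k = u (k - 1) (x k))
    (hUp : ∀ k, k < N → Up k = u k (x k))
    (hPm : ∀ k, 1 ≤ k → k ≤ N → Pm k = p (k - 1) (x k))
    (hPp : ∀ k, k < N → Pp k = p k (x k))
    -- periodic identification of the boundary interfaces
    (hUmper : Um 0 = Um N) (hUpper : Up N = Up 0)
    (hPmper : Pm 0 = Pm N) (hPpper : Pp N = Pp 0)
    (uhat phat : ℕ → ℝ)
    (huhat : ∀ k, uhat k = δ * Up k + (1 - δ) * Um k)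
    (hphat : ∀ k, phat k = (1 - δ) * Pp k + δ * Pm k) :
    ∑ j ∈ Finset.range N,
        ((∫ t in x j..x (j + 1), u j t * deriv (p j) t)
          - uhat (j + 1) * Pm (j + 1) + uhat j * Pp j
          + (∫ t in x j..x (j + 1), p j t * deriv (u j) t)
          - phat (j + 1) * Um (j + 1) + phat j * Up j) = 0 := by
  set f : ℕ → ℝ := fun k => -(δ * Up k * Pm k) - (1 - δ) * Um k * Pp k with hf
  have key : ∀ j ∈ Finset.range N,
      ((∫ t in x j..x (j + 1), u j t * deriv (p j) t)
          - uhat (j + 1) * Pm (j + 1) + uhat j * Pp j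
          + (∫ t in x j..x (j + 1), p j t * deriv (u j) t)
          - phat (j + 1) * Um (j + 1) + phat j * Up j) = f (j + 1) - f j := by
    intro j hj
    rw [Finset.mem_range] at hj
    have hud : Differentiable ℝ (u j) := (hu j).differentiable one_ne_zero
    have hpd : Differentiable ℝ (p j) := (hp j).differentiable one_ne_zero
    have hderiv : ∀ t : ℝ, deriv (fun s => u j s * p j s) t
        = u j t * deriv (p j) t + p j t * deriv (u j) t := by
      intro t
      rw [deriv_fun_mul (hud t) (hpd t)]; ring
    have hcont : Continuous (deriv (fun s => u j s * p j s)) := by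
      have : Continuous (fun t => u j t * deriv (p j) t + p j t * deriv (u j) t) :=
        (((hu j).continuous).mul ((hp j).continuous_deriv le_rfl)).add
          (((hp j).continuous).mul ((hu j).continuous_deriv le_rfl))
      exact (funext hderiv ▸ this : _)
    have hint : (∫ t in x j..x (j + 1), u j t * deriv (p j) t)
        + (∫ t in x j..x (j + 1), p j t * deriv (u j) t)
        = u j (x (j + 1)) * p j (x (j + 1)) - u j (x j) * p j (x j) := by
      rw [← intervalIntegral.integral_add (f := fun t => u j t * deriv (p j) t)
            (g := fun t => p j t * deriv (u j) t)
          (((hu j).continuous.mul ((hp j).continuous_deriv le_rfl)).intervalIntegrable _ _)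
          (((hp j).continuous.mul ((hu j).continuous_deriv le_rfl)).intervalIntegrable _ _)]
      have : (∫ t in x j..x (j + 1), (u j t * deriv (p j) t + p j t * deriv (u j) t))
          = ∫ t in x j..x (j + 1), deriv (fun s => u j s * p j s) t := by
        apply intervalIntegral.integral_congr
        intro t _; exact (hderiv t).symm
      rw [this, intervalIntegral.integral_deriv_eq_sub
        (fun t _ => ((hud t).fun_mul (hpd t)))
        (hcont.intervalIntegrable _ _)]
    have hA : u j (x (j + 1)) = Um (j + 1) := by
      rw [hUm (j + 1) (by omega) (by omega)]; simp
    have hB : p j (x (j + 1)) = Pm (j + 1) := by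
      rw [hPm (j + 1) (by omega) (by omega)]; simp
    have hC : u j (x j) = Up j := (hUp j hj).symm
    have hD : p j (x j) = Pp j := (hPp j hj).symm
    rw [hA, hB, hC, hD] at hint
    rw [huhat (j + 1), huhat j, hphat (j + 1), hphat j, hf]
    linear_combination hint
  rw [Finset.sum_congr rfl key, Finset.sum_range_sub]
  rw [hf]
  simp only
  rw [hUmper, hPmper, ← hUpper, ← hPpper]
  ring
end

section
/- Suppose a nonnegative sequence (ψ^n) with ψ^0 = 0 satisfies ψ^n ≤ ∑_{i=1}^{n-1}(b_{i-1}-b_i)ψ^{n-i} + C(τ² + h^{k+1} τ^α) for all 1 ≤ n ≤ M, where b_i = (i+1)^{1-α} - i^{1-α}, α ∈ (0,1), τ = T/M, and C, h, T > 0, k ≥ 0. Then ψ^n ≤ C' (τ^{2-α} + h^{k+1}) for all 1 ≤ n ≤ M, where C' depends only on C, T, α. -/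
open Finset

theorem stmt_14 (α T C : ℝ) (hα0 : 0 < α) (hα1 : α < 1) (hT : 0 < T) (hC : 0 < C) :
    ∃ C' : ℝ, 0 < C' ∧
      ∀ (M : ℕ) (h : ℝ) (k : ℕ) (ψ : ℕ → ℝ), 1 ≤ M → 0 < h →
        (∀ n, 0 ≤ ψ n) → ψ 0 = 0 →
        (∀ n : ℕ, 1 ≤ n → n ≤ M →
          ψ n ≤ (∑ i ∈ Finset.Icc 1 (n - 1),
              ((((i - 1 : ℕ) : ℝ) + 1) ^ (1 - α) - ((i - 1 : ℕ) : ℝ) ^ (1 - α)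
                - (((i : ℝ) + 1) ^ (1 - α) - (i : ℝ) ^ (1 - α))) * ψ (n - i))
            + C * ((T / M) ^ 2 + h ^ (k + 1) * (T / M) ^ α)) →
        ∀ n : ℕ, 1 ≤ n → n ≤ M →
          ψ n ≤ C' * ((T / M) ^ (2 - α) + h ^ (k + 1)) := by
  have hp0 : 0 < 1 - α := by linarith
  have hp1 : 1 - α < 1 := by linarith
  set b : ℕ → ℝ := fun i => ((i : ℝ) + 1) ^ (1 - α) - (i : ℝ) ^ (1 - α) with hbdef
  have hb0 : b 0 = 1 := by
    simp [hbdef, Real.zero_rpow hp0.ne', Real.one_rpow]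
  -- b is antitone
  have hbsucc : ∀ i : ℕ, b (i + 1) ≤ b i := by
    intro i
    have hconc := Real.concaveOn_rpow hp0.le hp1.le
    have hx : (i : ℝ) ∈ Set.Ici (0 : ℝ) := Set.mem_Ici.2 (by positivity)
    have hy : ((i : ℝ) + 2) ∈ Set.Ici (0 : ℝ) := Set.mem_Ici.2 (by positivity)
    have h2 := hconc.2 hx hy (by norm_num : (0:ℝ) ≤ 1/2) (by norm_num : (0:ℝ) ≤ 1/2)
      (by norm_num : (1/2 : ℝ) + 1/2 = 1)
    simp only [smul_eq_mul] at h2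
    have hmid : (1/2 : ℝ) * (i : ℝ) + (1/2 : ℝ) * ((i : ℝ) + 2) = (i : ℝ) + 1 := by ring
    rw [hmid] at h2
    simp only [hbdef]
    push_cast
    rw [show ((i : ℝ) + 1 + 1) = (i : ℝ) + 2 from by ring]
    linarith
  have hbanti : Antitone b := antitone_nat_of_succ_le hbsucc
  have hbpos : ∀ i : ℕ, 0 < b i := by
    intro i
    have : ((i : ℝ)) ^ (1 - α) < ((i : ℝ) + 1) ^ (1 - α) :=
      Real.rpow_lt_rpow (by positivity) (by linarith) hp0
    simp only [hbdef]; linarith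
  -- lower bound for b (n-1)
  have hblow : ∀ n : ℕ, 1 ≤ n → (1 - α) * (n : ℝ) ^ (-α) ≤ b (n - 1) := by
    intro n hn
    have hn0 : (0 : ℝ) < n := by exact_mod_cast hn
    have hn1 : (1 : ℝ) ≤ n := by exact_mod_cast hn
    have hs : (-1 : ℝ) ≤ -1 / n := by
      rw [neg_div, neg_le_neg_iff, div_le_one hn0]; exact hn1
    have hB := rpow_one_add_le_one_add_mul_self hs hp0.le hp1.le
    have h1 : ((n : ℝ) - 1) ^ (1 - α) = (n : ℝ) ^ (1 - α) * (1 + -1 / n) ^ (1 - α) := by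
      rw [← Real.mul_rpow hn0.le (by
        have : (0:ℝ) ≤ 1 - 1/n := by
          rw [sub_nonneg, div_le_one hn0]; exact hn1
        linarith [this])]
      congr 1; field_simp; ring
    have hnpowpos : 0 < (n : ℝ) ^ (1 - α) := Real.rpow_pos_of_pos hn0 _
    have h2 : (n : ℝ) ^ (1 - α) / n = (n : ℝ) ^ (-α) := by
      have hadd := Real.rpow_add hn0 (1 - α) (-1)
      rw [show (1 - α) + -1 = -α from by ring] at hadd
      rw [hadd, Real.rpow_neg_one, div_eq_mul_inv]
    have h3 : ((n : ℝ) - 1) ^ (1 - α) ≤ (n : ℝ) ^ (1 - α) - (1 - α) * (n : ℝ) ^ (-α) := by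
      rw [h1]
      have hmul := mul_le_mul_of_nonneg_left hB hnpowpos.le
      calc (n : ℝ) ^ (1 - α) * (1 + -1 / n) ^ (1 - α)
          ≤ (n : ℝ) ^ (1 - α) * (1 + (1 - α) * (-1 / n)) := hmul
        _ = (n : ℝ) ^ (1 - α) - (1 - α) * ((n : ℝ) ^ (1 - α) / n) := by ring
        _ = (n : ℝ) ^ (1 - α) - (1 - α) * (n : ℝ) ^ (-α) := by rw [h2]
    have hcast : ((n - 1 : ℕ) : ℝ) = (n : ℝ) - 1 := by
      have := Nat.cast_sub (R := ℝ) hn; push_cast at this ⊢; linarith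
    simp only [hbdef, hcast]
    rw [show ((n : ℝ) - 1 + 1) = (n : ℝ) from by ring]
    linarith
  -- telescoping sum
  have tel : ∀ m : ℕ, (∑ i ∈ Finset.Icc 1 m, (b (i - 1) - b i)) = b 0 - b m := by
    intro m
    induction m with
    | zero => simp
    | succ m ihm =>
      rw [Finset.sum_Icc_succ_top (Nat.le_add_left 1 m), ihm]
      simp only [Nat.add_sub_cancel]
      ring
  refine ⟨C * T ^ α / (1 - α), by positivity, ?_⟩
  intro M h k ψ hM hh hψnn hψ0 hrec
  have hM0 : (0 : ℝ) < M := by exact_mod_cast hM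
  set τ := T / M with hτdef
  have hτ : 0 < τ := div_pos hT hM0
  set G := C * (τ ^ 2 + h ^ (k + 1) * τ ^ α) with hGdef
  have hGpos : 0 < G := by positivity
  -- main Gronwall step
  have key : ∀ n : ℕ, 1 ≤ n → n ≤ M → ψ n ≤ G / b (n - 1) := by
    intro n
    induction n using Nat.strong_induction_on with
    | _ n ih =>
      intro hn1 hnM
      have hβ := hbpos (n - 1)
      have hrecn := hrec n hn1 hnM
      have hterm : ∀ i ∈ Finset.Icc 1 (n - 1),
          (b (i - 1) - b i) * ψ (n - i) ≤ (b (i - 1) - b i) * (G / b (n - 1)) := by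
        intro i hi
        rw [Finset.mem_Icc] at hi
        have hcoef : 0 ≤ b (i - 1) - b i := by
          have := hbanti (Nat.sub_le i 1); linarith
        have hni1 : 1 ≤ n - i := by omega
        have hniM : n - i ≤ M := by omega
        have hlt : n - i < n := by omega
        have h1 := ih (n - i) hlt hni1 hniM
        have h2 : b (n - 1) ≤ b (n - i - 1) := hbanti (by omega)
        have h3 : G / b (n - i - 1) ≤ G / b (n - 1) :=
          div_le_div_of_nonneg_left hGpos.le hβ h2
        exact mul_le_mul_of_nonneg_left (h1.trans h3) hcoef
      have hsum : (∑ i ∈ Finset.Icc 1 (n - 1), (b (i - 1) - b i) * ψ (n - i))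
          ≤ (b 0 - b (n - 1)) * (G / b (n - 1)) := by
        calc (∑ i ∈ Finset.Icc 1 (n - 1), (b (i - 1) - b i) * ψ (n - i))
            ≤ ∑ i ∈ Finset.Icc 1 (n - 1), (b (i - 1) - b i) * (G / b (n - 1)) :=
              Finset.sum_le_sum hterm
          _ = (∑ i ∈ Finset.Icc 1 (n - 1), (b (i - 1) - b i)) * (G / b (n - 1)) := by
              rw [Finset.sum_mul]
          _ = (b 0 - b (n - 1)) * (G / b (n - 1)) := by rw [tel]
      have hsum_eq : (∑ i ∈ Finset.Icc 1 (n - 1),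
          ((((i - 1 : ℕ) : ℝ) + 1) ^ (1 - α) - ((i - 1 : ℕ) : ℝ) ^ (1 - α)
            - (((i : ℝ) + 1) ^ (1 - α) - (i : ℝ) ^ (1 - α))) * ψ (n - i))
          = ∑ i ∈ Finset.Icc 1 (n - 1), (b (i - 1) - b i) * ψ (n - i) := by
        apply Finset.sum_congr rfl
        intro i _
        simp only [hbdef]
      rw [hsum_eq] at hrecn
      rw [hb0] at hsum
      have hexp : (1 - b (n - 1)) * (G / b (n - 1))
          = G / b (n - 1) - b (n - 1) * (G / b (n - 1)) := by ring
      have hβG : b (n - 1) * (G / b (n - 1)) = G := by field_simp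
      linarith
  intro n hn1 hnM
  have hn0 : (0 : ℝ) < n := by exact_mod_cast hn1
  have hβ := hbpos (n - 1)
  have hlow := hblow n hn1
  have hna : 0 < (n : ℝ) ^ α := Real.rpow_pos_of_pos hn0 _
  have hnna : (n : ℝ) ^ (-α) = ((n : ℝ) ^ α)⁻¹ := by
    rw [Real.rpow_neg hn0.le]
  have hlowpos : 0 < (1 - α) * (n : ℝ) ^ (-α) := by
    rw [hnna]; positivity
  have step1 : ψ n ≤ G / ((1 - α) * (n : ℝ) ^ (-α)) :=
    (key n hn1 hnM).trans (div_le_div_of_nonneg_left hGpos.le hlowpos hlow)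
  have step2 : G / ((1 - α) * (n : ℝ) ^ (-α)) = G * (n : ℝ) ^ α / (1 - α) := by
    rw [hnna]; field_simp
  rw [step2] at step1
  -- now bound G * n^α / (1-α)
  have hτn : (n : ℝ) * τ ≤ T := by
    rw [hτdef]
    have h1 : (n : ℝ) ≤ M := by exact_mod_cast hnM
    calc (n : ℝ) * (T / M) ≤ (M : ℝ) * (T / M) :=
          mul_le_mul_of_nonneg_right h1 (by positivity)
      _ = T := by field_simp
  have hna_mul : (n : ℝ) ^ α * τ ^ α ≤ T ^ α := by
    rw [← Real.mul_rpow hn0.le hτ.le]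
    exact Real.rpow_le_rpow (by positivity) hτn hα0.le
  have hτ2 : τ ^ (2 : ℕ) = τ ^ (2 - α) * τ ^ α := by
    rw [← Real.rpow_natCast τ 2, ← Real.rpow_add hτ]
    norm_num
  have hmain : G * (n : ℝ) ^ α ≤ C * T ^ α * (τ ^ (2 - α) + h ^ (k + 1)) := by
    rw [hGdef]
    have e1 : C * (τ ^ 2 + h ^ (k + 1) * τ ^ α) * (n : ℝ) ^ α
        = C * (τ ^ (2 - α) * ((n : ℝ) ^ α * τ ^ α) + h ^ (k + 1) * ((n : ℝ) ^ α * τ ^ α)) := by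
      rw [hτ2]; ring
    rw [e1]
    have hτ2α : (0:ℝ) ≤ τ ^ (2 - α) := (Real.rpow_pos_of_pos hτ _).le
    have hhk : (0:ℝ) ≤ h ^ (k + 1) := by positivity
    have t1 : τ ^ (2 - α) * ((n : ℝ) ^ α * τ ^ α) ≤ τ ^ (2 - α) * T ^ α :=
      mul_le_mul_of_nonneg_left hna_mul hτ2α
    have t2 : h ^ (k + 1) * ((n : ℝ) ^ α * τ ^ α) ≤ h ^ (k + 1) * T ^ α :=
      mul_le_mul_of_nonneg_left hna_mul hhk
    nlinarith [hC.le]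
  calc ψ n ≤ G * (n : ℝ) ^ α / (1 - α) := step1
    _ ≤ C * T ^ α * (τ ^ (2 - α) + h ^ (k + 1)) / (1 - α) :=
        (div_le_div_iff_of_pos_right hp0).mpr hmain
    _ = C * T ^ α / (1 - α) * (τ ^ (2 - α) + h ^ (k + 1)) := by ring
end
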